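/- arXiv:2507.14889 — 2 statements merged into one kernel-verified Lean document; each statement's English description precedes it below -/
import Mathlib

section
/- If a topological space X is a retract of a topological group G, then X is a retract of the subgroup of G generated by X (with the subspace topology). -/
/-- If a topological space `X` (a subspace of a topological group `G`) is a retract
of `G`, then `X` is a retract of the subgroup of `G` generated by `X`. -/
theorem retract_of_generated_subgroup {G : Type*} [Group G] [TopologicalSpace G]
    [IsTopologicalGroup G] (X : Set G) (r : C(G, G))
    (hr_mem : ∀ g : G, r g ∈ X) (hr_id : ∀ x ∈ X, r x = x) :
    ∃ s : C((Subgroup.closure X : Set G), (Subgroup.closure X : Set G)),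
      (∀ g : (Subgroup.closure X : Set G), (s g : G) ∈ X) ∧
      (∀ x : (Subgroup.closure X : Set G), (x : G) ∈ X → s x = x) := by
  refine ⟨⟨fun g => ⟨r g, Subgroup.subset_closure (hr_mem g)⟩, ?_⟩, ?_, ?_⟩
  · exact Continuous.subtype_mk (r.continuous.comp continuous_subtype_val) _
  · exact fun g => hr_mem g
  · intro x hx
    exact Subtype.ext (hr_id x hx)
end

section
/- Every first-countable ω-narrow topological group is separable and metrizable (second-countable). -/
open scoped Pointwise

/-- Every first-countable ω-narrow Hausdorff topological group is second-countable,
separable, and metrizable. -/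
theorem omega_narrow_firstCountable_secondCountable {G : Type*} [Group G]
    [TopologicalSpace G] [IsTopologicalGroup G] [T2Space G]
    [FirstCountableTopology G]
    (hG : ∀ U ∈ nhds (1 : G), ∃ A : Set G, A.Countable ∧ A * U = Set.univ) :
    SecondCountableTopology G ∧ TopologicalSpace.SeparableSpace G ∧
      TopologicalSpace.MetrizableSpace G := by
  -- Step 1: separability, via a countable antitone basis of neighborhoods of 1.
  obtain ⟨u, hu⟩ := (nhds (1 : G)).exists_antitone_basis
  choose A hAc hAU using fun n => hG (u n) (hu.mem n)
  haveI : TopologicalSpace.SeparableSpace G := by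
    refine ⟨⟨⋃ n, A n, Set.countable_iUnion hAc, ?_⟩⟩
    rw [dense_iff_inter_open]
    intro V hV ⟨x, hx⟩
    -- `W` is the preimage of `V` under `y ↦ x * y⁻¹`, a neighborhood of 1.
    have hW : (fun y : G => x * y⁻¹) ⁻¹' V ∈ nhds (1 : G) := by
      have hc : Continuous fun y : G => x * y⁻¹ := continuous_const.mul continuous_inv
      have := hc.continuousAt (x := (1 : G)) (hV.mem_nhds (by simpa using hx))
      simpa using this
    obtain ⟨n, hn⟩ := hu.mem_iff.mp hW
    have hxmem : x ∈ A n * u n := by rw [hAU n]; trivial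
    obtain ⟨a, ha, t, ht, hat⟩ := hxmem
    refine ⟨a, ?_, Set.mem_iUnion.mpr ⟨n, ha⟩⟩
    have : t ∈ (fun y : G => x * y⁻¹) ⁻¹' V := hn ht
    have hax : a = x * t⁻¹ := by
      rw [← hat]; group
    rwa [hax]
  -- Step 2: the canonical right uniformity is countably generated.
  letI : UniformSpace G := IsTopologicalGroup.rightUniformSpace G
  haveI : (uniformity G).IsCountablyGenerated := by
    rw [uniformity_eq_comap_nhds_one' G]
    exact Filter.comap.isCountablyGenerated _ _
  -- Step 3: second countable from separable + countably generated uniformity.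
  haveI : SecondCountableTopology G := UniformSpace.secondCountable_of_separable G
  -- Step 4: metrizable from T3 + second countable.
  exact ⟨inferInstance, inferInstance, inferInstance⟩
end
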